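/- arXiv:2209.04881 — 11 statements merged into one kernel-verified Lean document; each statement's English description precedes it below -/
import Mathlib

section
/- Let d ≥ 1 and let a, b ∈ {0,1}^d be binary vectors. Define ā ∈ {0,1}^{3d} as the concatenation of a, (1⃗ − a), and the all-zeros vector 0⃗ ∈ ℝ^d, and define b̄ ∈ {0,1}^{3d} as the concatenation of b, 0⃗, and (1⃗ − b). Then ā^T ā = d, b̄^T b̄ = d, ā^T b̄ = a^T b, and hence ‖ā − b̄‖₂² = 2d − 2 a^T b. Consequently, ‖ā − b̄‖₂² ≥ 2d if and only if a^T b = 0; in particular, for families a_1,…,a_n, b_1,…,b_n ∈ {0,1}^d, there exist i, j ∈ [n] with a_i^T b_j = 0 if and only if there exist i, j ∈ [n] with ‖ā_i − b̄_j‖₂ ≥ √(2d). -/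
open Finset Real

/-- Dot product of two real vectors. -/
noncomputable def dotp {d : ℕ} (x y : Fin d → ℝ) : ℝ := ∑ r, x r * y r

/-- Squared Euclidean distance between two real vectors. -/
noncomputable def sqdist {d : ℕ} (x y : Fin d → ℝ) : ℝ := ∑ r, (x r - y r) ^ 2

/-- The BHFP gadget `ā = (a, 1⃗ - a, 0⃗)`. -/
noncomputable def bhfpA {d : ℕ} (a : Fin d → ℝ) : Fin (d + d + d) → ℝ :=
  Fin.append (Fin.append a (fun r => 1 - a r)) (fun _ => (0 : ℝ))

/-- The BHFP gadget `b̄ = (b, 0⃗, 1⃗ - b)`. -/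
noncomputable def bhfpB {d : ℕ} (b : Fin d → ℝ) : Fin (d + d + d) → ℝ :=
  Fin.append (Fin.append b (fun _ => (0 : ℝ))) (fun r => 1 - b r)

lemma sum3 {d : ℕ} (x y z u v w : Fin d → ℝ) (F : ℝ → ℝ → ℝ) :
    ∑ r : Fin (d + d + d), F (Fin.append (Fin.append x y) z r)
        (Fin.append (Fin.append u v) w r) =
    ∑ r, F (x r) (u r) + ∑ r, F (y r) (v r) + ∑ r, F (z r) (w r) := by
  rw [Fin.sum_univ_add, Fin.sum_univ_add]
  simp only [Fin.append_left, Fin.append_right]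

lemma dotp_nonneg {d : ℕ} (a b : Fin d → ℝ) (ha : ∀ r, a r = 0 ∨ a r = 1)
    (hb : ∀ r, b r = 0 ∨ b r = 1) : 0 ≤ dotp a b := by
  apply Finset.sum_nonneg
  intro r _
  rcases ha r with h | h <;> rcases hb r with h' | h' <;> simp [h, h']

theorem ovp_to_bhfp_part1 (d : ℕ) (a b : Fin d → ℝ)
      (ha : ∀ r, a r = 0 ∨ a r = 1) (hb : ∀ r, b r = 0 ∨ b r = 1) :
      dotp (bhfpA a) (bhfpA a) = (d : ℝ) ∧
      dotp (bhfpB b) (bhfpB b) = (d : ℝ) ∧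
      dotp (bhfpA a) (bhfpB b) = dotp a b ∧
      sqdist (bhfpA a) (bhfpB b) = 2 * (d : ℝ) - 2 * dotp a b ∧
      (2 * (d : ℝ) ≤ sqdist (bhfpA a) (bhfpB b) ↔ dotp a b = 0) := by
  have hAA : dotp (bhfpA a) (bhfpA a) = (d : ℝ) := by
    rw [dotp, bhfpA, sum3]
    have : ∀ r : Fin d, a r * a r + (1 - a r) * (1 - a r) = 1 := by
      intro r; rcases ha r with h | h <;> simp [h]
    calc ∑ r, a r * a r + ∑ r, (1 - a r) * (1 - a r) + ∑ _r : Fin d, (0:ℝ) * 0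
        = ∑ r : Fin d, (a r * a r + (1 - a r) * (1 - a r)) := by
          rw [Finset.sum_add_distrib]; simp
      _ = (d : ℝ) := by simp [this]
  have hBB : dotp (bhfpB b) (bhfpB b) = (d : ℝ) := by
    rw [dotp, bhfpB, sum3]
    have : ∀ r : Fin d, b r * b r + (1 - b r) * (1 - b r) = 1 := by
      intro r; rcases hb r with h | h <;> simp [h]
    calc ∑ r, b r * b r + ∑ _r : Fin d, (0:ℝ) * 0 + ∑ r, (1 - b r) * (1 - b r)
        = ∑ r : Fin d, (b r * b r + (1 - b r) * (1 - b r)) := by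
          rw [Finset.sum_add_distrib]; simp
      _ = (d : ℝ) := by simp [this]
  have hAB : dotp (bhfpA a) (bhfpB b) = dotp a b := by
    rw [dotp, bhfpA, bhfpB, sum3]
    simp [dotp]
  have hsq : sqdist (bhfpA a) (bhfpB b) = 2 * (d : ℝ) - 2 * dotp a b := by
    have key : sqdist (bhfpA a) (bhfpB b) =
        dotp (bhfpA a) (bhfpA a) - 2 * dotp (bhfpA a) (bhfpB b)
          + dotp (bhfpB b) (bhfpB b) := by
      rw [sqdist, dotp, dotp, dotp, Finset.mul_sum, ← Finset.sum_sub_distrib,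
        ← Finset.sum_add_distrib]
      apply Finset.sum_congr rfl
      intro r _; ring
    rw [key, hAA, hBB, hAB]; ring
  refine ⟨hAA, hBB, hAB, hsq, ?_⟩
  rw [hsq]
  constructor
  · intro h
    have := dotp_nonneg a b ha hb
    linarith
  · intro h; rw [h]; ring_nf; exact le_refl _

/-- Correctness of the reduction from OVP to BHFP:
`ā^T ā = d`, `b̄^T b̄ = d`, `ā^T b̄ = a^T b`, `‖ā - b̄‖₂² = 2d - 2 a^T b`,
hence `‖ā - b̄‖₂² ≥ 2d ↔ a^T b = 0`, and the families version. -/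
theorem ovp_to_bhfp (d : ℕ) (hd : 1 ≤ d) :
    (∀ a b : Fin d → ℝ,
      (∀ r, a r = 0 ∨ a r = 1) → (∀ r, b r = 0 ∨ b r = 1) →
      dotp (bhfpA a) (bhfpA a) = (d : ℝ) ∧
      dotp (bhfpB b) (bhfpB b) = (d : ℝ) ∧
      dotp (bhfpA a) (bhfpB b) = dotp a b ∧
      sqdist (bhfpA a) (bhfpB b) = 2 * (d : ℝ) - 2 * dotp a b ∧
      (2 * (d : ℝ) ≤ sqdist (bhfpA a) (bhfpB b) ↔ dotp a b = 0)) ∧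
    (∀ n : ℕ, ∀ a b : Fin n → Fin d → ℝ,
      (∀ i r, a i r = 0 ∨ a i r = 1) → (∀ i r, b i r = 0 ∨ b i r = 1) →
      ((∃ i j, dotp (a i) (b j) = 0) ↔
        ∃ i j, Real.sqrt (2 * (d : ℝ)) ≤
          Real.sqrt (sqdist (bhfpA (a i)) (bhfpB (b j))))) := by
  refine ⟨fun a b ha hb => ovp_to_bhfp_part1 d a b ha hb, ?_⟩
  intro n a b ha hb
  have key : ∀ i j, (dotp (a i) (b j) = 0 ↔
      Real.sqrt (2 * (d : ℝ)) ≤ Real.sqrt (sqdist (bhfpA (a i)) (bhfpB (b j)))) := by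
    intro i j
    have h := (ovp_to_bhfp_part1 d (a i) (b j) (ha i) (hb j)).2.2.2.2
    rw [← h]
    constructor
    · intro hle; exact Real.sqrt_le_sqrt hle
    · intro hle
      have h2 : (0:ℝ) ≤ 2 * (d:ℝ) := by positivity
      nlinarith [Real.sq_sqrt h2, Real.sqrt_nonneg (sqdist (bhfpA (a i)) (bhfpB (b j))),
        Real.sq_sqrt (show (0:ℝ) ≤ sqdist (bhfpA (a i)) (bhfpB (b j)) by
          apply Finset.sum_nonneg; intro r _; positivity), Real.sqrt_nonneg (2*(d:ℝ))]
  constructor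
  · rintro ⟨i, j, h⟩; exact ⟨i, j, (key i j).mp h⟩
  · rintro ⟨i, j, h⟩; exact ⟨i, j, (key i j).mpr h⟩
end

section
/- Let n ≥ 2, d ≥ 1, let a_1,…,a_n, b_1,…,b_n ∈ {0,1}^d be binary vectors, and let t ≥ 1 be an integer. Set C = 2 ln n and, for each i ∈ [n], define Y_i = Σ_{j=1}^n exp(C · a_i^T b_j). Then there exist i, j ∈ [n] with a_i^T b_j ≥ t if and only if there exists i ∈ [n] with Y_i > n · exp(C(t−1)). -/
open Finset Real
set_option maxHeartbeats 1000000

/-- Case analysis (exact computation) underlying the reduction from TVPP to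
exponential dot-product self-attention (Theorem 1). -/
theorem tvpp_exp_dot_product_exact (n d t : ℕ) (hn : 2 ≤ n) (hd : 1 ≤ d) (ht : 1 ≤ t)
    (a b : Fin n → Fin d → ℝ)
    (ha : ∀ i r, a i r = 0 ∨ a i r = 1) (hb : ∀ i r, b i r = 0 ∨ b i r = 1)
    (C : ℝ) (hC : C = 2 * Real.log n)
    (Y : Fin n → ℝ)
    (hY : ∀ i, Y i = ∑ j, Real.exp (C * dotp (a i) (b j))) :
    (∃ i j, (t : ℝ) ≤ dotp (a i) (b j)) ↔
      (∃ i, Y i > (n : ℝ) * Real.exp (C * ((t : ℝ) - 1))) := by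
  have hn1 : (1 : ℝ) < n := by exact_mod_cast lt_of_lt_of_le one_lt_two hn
  have hn0 : (0 : ℝ) < n := lt_trans one_pos hn1
  have hC0 : 0 < C := by
    rw [hC]
    have := Real.log_pos hn1
    linarith
  -- dot products are naturals
  have hnat : ∀ i j, ∃ m : ℕ, dotp (a i) (b j) = m := by
    intro i j
    refine ⟨(univ.filter fun r => a i r = 1 ∧ b j r = 1).card, ?_⟩
    unfold dotp
    rw [← Finset.sum_boole]
    refine Finset.sum_congr rfl fun r _ => ?_
    rcases ha i r with h1 | h1 <;> rcases hb j r with h2 | h2 <;>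
      simp [h1, h2]
  constructor
  · rintro ⟨i, j, hij⟩
    refine ⟨i, ?_⟩
    have key : Real.exp (C * ((t : ℝ) - 1)) * (n : ℝ) ^ 2 ≤ Real.exp (C * dotp (a i) (b j)) := by
      have : Real.exp (C * ((t : ℝ) - 1)) * (n : ℝ) ^ 2
          = Real.exp (C * (t : ℝ)) := by
        have hexpC : Real.exp C = (n : ℝ) ^ 2 := by
          rw [hC, show (2:ℝ) * Real.log n = Real.log n + Real.log n by ring,
            Real.exp_add, Real.exp_log hn0]
          ring
        rw [← hexpC, ← Real.exp_add]
        ring_nf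
      rw [this]
      exact Real.exp_le_exp.2 (mul_le_mul_of_nonneg_left hij hC0.le)
    have hle : Real.exp (C * dotp (a i) (b j)) ≤ Y i := by
      rw [hY i]
      exact Finset.single_le_sum (f := fun k => Real.exp (C * dotp (a i) (b k)))
        (fun k _ => (Real.exp_pos _).le) (Finset.mem_univ j)
    have : (n : ℝ) * Real.exp (C * ((t : ℝ) - 1)) < Real.exp (C * ((t : ℝ) - 1)) * (n : ℝ) ^ 2 := by
      have he := Real.exp_pos (C * ((t : ℝ) - 1))
      nlinarith [mul_pos (mul_pos he hn0) (sub_pos.2 hn1)]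
    linarith
  · rintro ⟨i, hi⟩
    by_contra hcon
    push_neg at hcon
    have hbound : ∀ j, Real.exp (C * dotp (a i) (b j)) ≤ Real.exp (C * ((t : ℝ) - 1)) := by
      intro j
      obtain ⟨m, hm⟩ := hnat i j
      have hmt : dotp (a i) (b j) ≤ (t : ℝ) - 1 := by
        have hlt := hcon i j
        rw [hm] at hlt ⊢
        have : m < t := by exact_mod_cast hlt
        have : m ≤ t - 1 := Nat.le_sub_one_of_lt this
        have ht' : (1 : ℝ) ≤ t := by exact_mod_cast ht
        have : (m : ℝ) ≤ (t - 1 : ℕ) := by exact_mod_cast this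
        rw [Nat.cast_sub ht] at this
        simpa using this
      exact Real.exp_le_exp.2 (mul_le_mul_of_nonneg_left hmt hC0.le)
    have : Y i ≤ (n : ℝ) * Real.exp (C * ((t : ℝ) - 1)) := by
      rw [hY i]
      calc ∑ j, Real.exp (C * dotp (a i) (b j))
          ≤ ∑ _j : Fin n, Real.exp (C * ((t : ℝ) - 1)) :=
            Finset.sum_le_sum fun j _ => hbound j
        _ = (n : ℝ) * Real.exp (C * ((t : ℝ) - 1)) := by
            simp [Finset.sum_const, mul_comm]
    linarith
end

section
/- Let n ≥ 2, d ≥ 1, let a_1,…,a_n, b_1,…,b_n ∈ {0,1}^d be binary vectors, let t ≥ 1 be an integer, and let 0 ≤ μ < 1. Set C = 2 ln((1+μ)n/(1−μ)) and, for each i ∈ [n], define Y_i = Σ_{j=1}^n exp(C · a_i^T b_j). Suppose Ŷ_1,…,Ŷ_n are real numbers with |Ŷ_i − Y_i| ≤ μ |Y_i| for all i ∈ [n]. Then there exist i, j ∈ [n] with a_i^T b_j ≥ t if and only if there exists i ∈ [n] with Ŷ_i > (1+μ) n · exp(C(t−1)). -/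
open Finset Real

set_option maxHeartbeats 1000000 in
/-- Case analysis (element-wise multiplicative approximation) underlying the
reduction from TVPP to exponential dot-product self-attention (Theorem 1). -/
theorem tvpp_exp_dot_product_mult_approx (n d t : ℕ) (hn : 2 ≤ n) (hd : 1 ≤ d) (ht : 1 ≤ t)
    (a b : Fin n → Fin d → ℝ)
    (ha : ∀ i r, a i r = 0 ∨ a i r = 1) (hb : ∀ i r, b i r = 0 ∨ b i r = 1)
    (μ : ℝ) (hμ0 : 0 ≤ μ) (hμ1 : μ < 1)
    (C : ℝ) (hC : C = 2 * Real.log ((1 + μ) * n / (1 - μ)))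
    (Y : Fin n → ℝ)
    (hY : ∀ i, Y i = ∑ j, Real.exp (C * dotp (a i) (b j)))
    (Yhat : Fin n → ℝ)
    (hYhat : ∀ i, |Yhat i - Y i| ≤ μ * |Y i|) :
    (∃ i j, (t : ℝ) ≤ dotp (a i) (b j)) ↔
      (∃ i, Yhat i > (1 + μ) * (n : ℝ) * Real.exp (C * ((t : ℝ) - 1))) := by
  classical
  have hn' : (2:ℝ) ≤ n := by exact_mod_cast hn
  have hμ1' : (0:ℝ) < 1 - μ := by linarith
  set x : ℝ := (1 + μ) * n / (1 - μ) with hxdef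
  have hx1 : 1 < x := by
    rw [hxdef, lt_div_iff₀ hμ1']
    nlinarith
  have hx0 : 0 < x := lt_trans one_pos hx1
  have hexpC : Real.exp C = x ^ 2 := by
    rw [hC, two_mul, Real.exp_add, Real.exp_log hx0]; ring
  have hC0 : 0 < C := by
    have := Real.log_pos hx1
    rw [hC]; linarith
  have hxeq : (1 - μ) * x = (1 + μ) * n := by
    rw [hxdef]; field_simp
  have hdpnat : ∀ i j, ∃ m : ℕ, dotp (a i) (b j) = m := by
    intro i j
    refine ⟨∑ r, if a i r = 1 ∧ b j r = 1 then 1 else 0, ?_⟩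
    unfold dotp
    push_cast
    apply Finset.sum_congr rfl
    intro r _
    rcases ha i r with h1 | h1 <;> rcases hb j r with h2 | h2 <;> simp [h1, h2]
  have hYpos : ∀ i, 0 < Y i := by
    intro i
    rw [hY i]
    apply Finset.sum_pos (fun j _ => Real.exp_pos _)
    exact ⟨⟨0, by omega⟩, Finset.mem_univ _⟩
  constructor
  · rintro ⟨i, j, hij⟩
    refine ⟨i, ?_⟩
    have hYlb : Real.exp (C * dotp (a i) (b j)) ≤ Y i := by
      rw [hY i]
      exact Finset.single_le_sum (f := fun k => Real.exp (C * dotp (a i) (b k)))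
        (fun k _ => (Real.exp_pos _).le) (Finset.mem_univ j)
    have h1 : Real.exp (C * t) ≤ Real.exp (C * dotp (a i) (b j)) :=
      Real.exp_le_exp.mpr (mul_le_mul_of_nonneg_left hij hC0.le)
    have h2 : (1 - μ) * Y i ≤ Yhat i := by
      have h := hYhat i
      rw [abs_of_pos (hYpos i)] at h
      have h' := (abs_le.mp h).1
      linarith
    have hsplit : Real.exp (C * t) = Real.exp (C * ((t : ℝ) - 1)) * Real.exp C := by
      rw [← Real.exp_add]; ring_nf
    have hkey : (1 + μ) * n * Real.exp (C * ((t : ℝ) - 1)) < (1 - μ) * Real.exp (C * t) := by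
      rw [hsplit, hexpC]
      have hep : 0 < Real.exp (C * ((t : ℝ) - 1)) := Real.exp_pos _
      have hμn : 0 < (1 + μ) * (n : ℝ) := by nlinarith
      have heq : (1 - μ) * (Real.exp (C * ((t : ℝ) - 1)) * x ^ 2)
          = ((1 + μ) * (n : ℝ) * Real.exp (C * ((t : ℝ) - 1))) * x := by
        rw [← hxeq]; ring
      rw [heq]
      nlinarith [mul_pos hμn hep]
    have : (1 - μ) * Real.exp (C * t) ≤ Yhat i := by
      calc (1 - μ) * Real.exp (C * t) ≤ (1 - μ) * Y i := by
            apply mul_le_mul_of_nonneg_left _ hμ1'.le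
            exact le_trans h1 hYlb
        _ ≤ Yhat i := h2
    linarith
  · rintro ⟨i, hi⟩
    by_contra hcon
    push_neg at hcon
    have hub : Y i ≤ n * Real.exp (C * ((t : ℝ) - 1)) := by
      rw [hY i]
      calc (∑ j, Real.exp (C * dotp (a i) (b j)))
          ≤ ∑ _j : Fin n, Real.exp (C * ((t : ℝ) - 1)) := by
            apply Finset.sum_le_sum
            intro j _
            apply Real.exp_le_exp.mpr
            apply mul_le_mul_of_nonneg_left _ hC0.le
            obtain ⟨m, hm⟩ := hdpnat i j
            have hmt : m < t := by
              have := hcon i j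
              rw [hm] at this
              exact_mod_cast this
            have : (m : ℝ) + 1 ≤ (t : ℝ) := by exact_mod_cast hmt
            rw [hm]; linarith
        _ = n * Real.exp (C * ((t : ℝ) - 1)) := by
            rw [Finset.sum_const, Finset.card_univ, Fintype.card_fin, nsmul_eq_mul]
    have h2 : Yhat i ≤ (1 + μ) * Y i := by
      have h := hYhat i
      rw [abs_of_pos (hYpos i)] at h
      have h' := (abs_le.mp h).2
      linarith
    have : Yhat i ≤ (1 + μ) * ((n : ℝ) * Real.exp (C * ((t : ℝ) - 1))) := by
      calc Yhat i ≤ (1 + μ) * Y i := h2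
        _ ≤ (1 + μ) * ((n : ℝ) * Real.exp (C * ((t : ℝ) - 1))) := by
            apply mul_le_mul_of_nonneg_left hub (by linarith)
    linarith [hi, this]
end

section
/- Let n ≥ 2, d ≥ 1, let a_1,…,a_n, b_1,…,b_n ∈ {0,1}^d be binary vectors, let t ≥ 1 be an integer, and let 0 ≤ μ < 1. Set C = 2 ln((1+μ)n/(1−μ)) and define S_{ij} = exp(C · a_i^T b_j) for i, j ∈ [n]. Suppose Ŝ ∈ ℝ^{n×n} satisfies |Ŝ_{ij} − S_{ij}| ≤ μ S_{ij} for all i, j ∈ [n], and set Y_i = Σ_{j=1}^n Ŝ_{ij}. Then there exist i, j ∈ [n] with a_i^T b_j ≥ t if and only if there exists i ∈ [n] with Y_i > (1+μ) n · exp(C(t−1)). -/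
open Finset Real

/-!
Put `K = (1 + μ) n / (1 - μ) > 1`, so that `exp C = K²`. Dot products of binary vectors are
natural numbers, so either some `a_iᵀ b_j ≥ t`, and then the single entry
`Ŝ_ij ≥ (1 - μ) K² e^{C(t-1)}` already exceeds the threshold
`(1 + μ) n e^{C(t-1)} = (1 - μ) K e^{C(t-1)}`, or all `a_iᵀ b_j ≤ t - 1`, and then every row sum
is at most `n (1 + μ) e^{C(t-1)}`.
-/

lemma exists_natCast_eq_dotp_of_binary {d : ℕ} {x y : Fin d → ℝ}
    (hx : ∀ r, x r = 0 ∨ x r = 1) (hy : ∀ r, y r = 0 ∨ y r = 1) :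
    ∃ m : ℕ, dotp x y = m := by
  refine ⟨∑ r, if x r * y r = 1 then 1 else 0, ?_⟩
  rw [dotp, Nat.cast_sum]
  refine Finset.sum_congr rfl fun r _ => ?_
  rcases hx r with h | h <;> rcases hy r with h' | h' <;> norm_num [h, h']

lemma le_sub_one_of_lt_of_binary {d : ℕ} {x y : Fin d → ℝ}
    (hx : ∀ r, x r = 0 ∨ x r = 1) (hy : ∀ r, y r = 0 ∨ y r = 1) {t : ℕ}
    (h : dotp x y < t) : dotp x y ≤ (t : ℝ) - 1 := by
  obtain ⟨m, hm⟩ := exists_natCast_eq_dotp_of_binary hx hy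
  rw [hm] at h ⊢
  have : m + 1 ≤ t := by exact_mod_cast h
  have : (m : ℝ) + 1 ≤ t := by exact_mod_cast this
  linarith

lemma mul_exp_sub_one_lt_one_sub_mul_exp {μ n C : ℝ} (hμ : μ < 1) (hK : 1 - μ < (1 + μ) * n)
    (hC : C = 2 * Real.log ((1 + μ) * n / (1 - μ))) (s : ℝ) :
    (1 + μ) * n * Real.exp (C * (s - 1)) < (1 - μ) * Real.exp (C * s) := by
  have h1μ : 0 < 1 - μ := by linarith
  set K := (1 + μ) * n / (1 - μ)
  have hK1 : 1 < K := (one_lt_div h1μ).2 hK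
  have hexpC : Real.exp C = K ^ 2 := by
    rw [hC, mul_comm, Real.exp_mul, Real.exp_log (by linarith)]
    norm_cast
  have hKmul : (1 - μ) * K = (1 + μ) * n := mul_div_cancel₀ _ h1μ.ne'
  have hE : 0 < Real.exp (C * (s - 1)) := Real.exp_pos _
  calc (1 + μ) * n * Real.exp (C * (s - 1))
      < (1 + μ) * n * Real.exp (C * (s - 1)) * K := by
        apply lt_mul_of_one_lt_right _ hK1
        exact mul_pos (by linarith) hE
    _ = (1 - μ) * (Real.exp C * Real.exp (C * (s - 1))) := by rw [hexpC, ← hKmul]; ring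
    _ = (1 - μ) * Real.exp (C * s) := by rw [← Real.exp_add]; ring_nf

section RowSum

variable {ι : Type*} [Fintype ι] {μ : ℝ} {s ŝ : ι → ℝ}

lemma one_sub_mul_le_sum_of_abs_sub_le (hμ : μ ≤ 1) (hs : ∀ j, 0 ≤ s j)
    (hŝ : ∀ j, |ŝ j - s j| ≤ μ * s j) (j : ι) :
    (1 - μ) * s j ≤ ∑ k, ŝ k := by
  have hlow : ∀ k, (1 - μ) * s k ≤ ŝ k := fun k => by
    linarith [(abs_le.mp (hŝ k)).1]
  calc (1 - μ) * s j ≤ ŝ j := hlow j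
    _ ≤ ∑ k, ŝ k := Finset.single_le_sum
        (fun k _ => (mul_nonneg (by linarith) (hs k)).trans (hlow k)) (Finset.mem_univ j)

lemma sum_le_card_mul_of_abs_sub_le (hμ : 0 ≤ μ) (hŝ : ∀ j, |ŝ j - s j| ≤ μ * s j) {E : ℝ}
    (hE : ∀ j, s j ≤ E) :
    ∑ j, ŝ j ≤ Fintype.card ι * ((1 + μ) * E) := by
  have hup : ∀ j, ŝ j ≤ (1 + μ) * E := fun j => by
    nlinarith [(abs_le.mp (hŝ j)).2, hE j]
  calc ∑ j, ŝ j ≤ ∑ _j : ι, (1 + μ) * E := Finset.sum_le_sum fun j _ => hup j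
    _ = Fintype.card ι * ((1 + μ) * E) := by rw [Finset.sum_const, Finset.card_univ, nsmul_eq_mul]

end RowSum

theorem tvpp_score_matrix_mult_approx_general (n d t : ℕ) (hn : 2 ≤ n)
    (a b : Fin n → Fin d → ℝ)
    (ha : ∀ i r, a i r = 0 ∨ a i r = 1) (hb : ∀ i r, b i r = 0 ∨ b i r = 1)
    (μ : ℝ) (hμ0 : 0 ≤ μ) (hμ1 : μ < 1)
    (C : ℝ) (hC : C = 2 * Real.log ((1 + μ) * n / (1 - μ)))
    (S : Fin n → Fin n → ℝ)
    (hS : ∀ i j, S i j = Real.exp (C * dotp (a i) (b j)))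
    (Shat : Fin n → Fin n → ℝ)
    (hShat : ∀ i j, |Shat i j - S i j| ≤ μ * S i j)
    (Y : Fin n → ℝ) (hY : ∀ i, Y i = ∑ j, Shat i j) :
    (∃ i j, (t : ℝ) ≤ dotp (a i) (b j)) ↔
      (∃ i, Y i > (1 + μ) * (n : ℝ) * Real.exp (C * ((t : ℝ) - 1))) := by
  have hK : 1 - μ < (1 + μ) * n := by
    have : (2 : ℝ) ≤ n := by exact_mod_cast hn
    nlinarith
  have hC0 : 0 ≤ C := by
    rw [hC]
    linarith [Real.log_pos ((one_lt_div (by linarith)).2 hK)]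
  have hS_nonneg : ∀ i j, 0 ≤ S i j := fun i j => by rw [hS]; exact (Real.exp_pos _).le
  constructor
  · rintro ⟨i, j, hij⟩
    refine ⟨i, ?_⟩
    have hSij : Real.exp (C * t) ≤ S i j := by
      rw [hS]; exact Real.exp_le_exp.mpr (mul_le_mul_of_nonneg_left hij hC0)
    calc (1 + μ) * n * Real.exp (C * (t - 1)) < (1 - μ) * Real.exp (C * t) :=
          mul_exp_sub_one_lt_one_sub_mul_exp hμ1 hK hC t
      _ ≤ (1 - μ) * S i j := mul_le_mul_of_nonneg_left hSij (by linarith)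
      _ ≤ Y i := hY i ▸ one_sub_mul_le_sum_of_abs_sub_le hμ1.le (hS_nonneg i) (hShat i) j
  · rintro ⟨i, hi⟩
    by_contra! hsmall
    have hSle : ∀ j, S i j ≤ Real.exp (C * ((t : ℝ) - 1)) := fun j => by
      rw [hS]
      exact Real.exp_le_exp.mpr <| mul_le_mul_of_nonneg_left
        (le_sub_one_of_lt_of_binary (ha i) (hb j) (hsmall i j)) hC0
    have := hY i ▸ sum_le_card_mul_of_abs_sub_le hμ0 (hShat i) hSle
    rw [Fintype.card_fin] at this
    linarith

/-- Case analysis underlying the hardness of multiplicative element-wise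
approximation of the score matrix `S` for exponential dot-product
self-attention. -/
theorem tvpp_score_matrix_mult_approx (n d t : ℕ) (hn : 2 ≤ n) (hd : 1 ≤ d) (ht : 1 ≤ t)
    (a b : Fin n → Fin d → ℝ)
    (ha : ∀ i r, a i r = 0 ∨ a i r = 1) (hb : ∀ i r, b i r = 0 ∨ b i r = 1)
    (μ : ℝ) (hμ0 : 0 ≤ μ) (hμ1 : μ < 1)
    (C : ℝ) (hC : C = 2 * Real.log ((1 + μ) * n / (1 - μ)))
    (S : Fin n → Fin n → ℝ)
    (hS : ∀ i j, S i j = Real.exp (C * dotp (a i) (b j)))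
    (Shat : Fin n → Fin n → ℝ)
    (hShat : ∀ i j, |Shat i j - S i j| ≤ μ * S i j)
    (Y : Fin n → ℝ) (hY : ∀ i, Y i = ∑ j, Shat i j) :
    (∃ i j, (t : ℝ) ≤ dotp (a i) (b j)) ↔
      (∃ i, Y i > (1 + μ) * (n : ℝ) * Real.exp (C * ((t : ℝ) - 1))) :=
  tvpp_score_matrix_mult_approx_general n d t hn a b ha hb μ hμ0 hμ1 C hC S hS Shat hShat Y hY
end

section
/- Let n ≥ 2, d ≥ 1, let a_1,…,a_n, b_1,…,b_n ∈ {0,1}^d be binary vectors, let t ≥ 1 be an integer, and let μ ≥ 0. Set C = 2 ln(n + 2μ) and define S_{ij} = exp(C · a_i^T b_j) for i, j ∈ [n]. Suppose Ŝ ∈ ℝ^{n×n} satisfies |Ŝ_{ij} − S_{ij}| ≤ μ for all i, j ∈ [n], and set Y_i = Σ_{j=1}^n Ŝ_{ij}. Then there exist i, j ∈ [n] with a_i^T b_j ≥ t if and only if there exists i ∈ [n] with Y_i > n · exp(C(t−1)) + nμ. -/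
open Finset Real

lemma dotp_nat {d : ℕ} (x y : Fin d → ℝ) (hx : ∀ r, x r = 0 ∨ x r = 1)
    (hy : ∀ r, y r = 0 ∨ y r = 1) : ∃ m : ℕ, dotp x y = m := by
  classical
  refine ⟨(Finset.univ.filter (fun r => x r = 1 ∧ y r = 1)).card, ?_⟩
  unfold dotp
  rw [← Finset.sum_boole]
  refine Finset.sum_congr rfl fun r _ => ?_
  rcases hx r with h | h <;> rcases hy r with h' | h' <;> simp [h, h']

/-- Case analysis underlying the hardness of additive element-wise
approximation of the score matrix `S` for exponential dot-product
self-attention. -/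
theorem tvpp_score_matrix_add_approx (n d t : ℕ) (hn : 2 ≤ n) (hd : 1 ≤ d) (ht : 1 ≤ t)
    (a b : Fin n → Fin d → ℝ)
    (ha : ∀ i r, a i r = 0 ∨ a i r = 1) (hb : ∀ i r, b i r = 0 ∨ b i r = 1)
    (μ : ℝ) (hμ0 : 0 ≤ μ)
    (C : ℝ) (hC : C = 2 * Real.log ((n : ℝ) + 2 * μ))
    (S : Fin n → Fin n → ℝ)
    (hS : ∀ i j, S i j = Real.exp (C * dotp (a i) (b j)))
    (Shat : Fin n → Fin n → ℝ)
    (hShat : ∀ i j, |Shat i j - S i j| ≤ μ)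
    (Y : Fin n → ℝ) (hY : ∀ i, Y i = ∑ j, Shat i j) :
    (∃ i j, (t : ℝ) ≤ dotp (a i) (b j)) ↔
      (∃ i, Y i > (n : ℝ) * Real.exp (C * ((t : ℝ) - 1)) + (n : ℝ) * μ) := by
  have hn2 : (2:ℝ) ≤ (n:ℝ) := by exact_mod_cast hn
  have ht1 : (1:ℝ) ≤ (t:ℝ) := by exact_mod_cast ht
  have hpos : (1:ℝ) < (n:ℝ) + 2*μ := by linarith
  have hCpos : 0 < C := by
    have hl := Real.log_pos hpos
    rw [hC]; linarith
  have hexpC : Real.exp C = ((n:ℝ) + 2*μ)^2 := by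
    rw [hC, two_mul, Real.exp_add, Real.exp_log (by linarith), sq]
  have hE1 : 1 ≤ Real.exp (C * ((t:ℝ) - 1)) := by
    apply Real.one_le_exp
    exact mul_nonneg hCpos.le (by linarith)
  constructor
  · rintro ⟨i, j, hij⟩
    refine ⟨i, ?_⟩
    have hge : ∀ j', S i j' - μ ≤ Shat i j' := fun j' => by
      have h := abs_le.mp (hShat i j'); linarith [h.1]
    have hYlb : ∑ j', (S i j' - μ) ≤ Y i := by
      rw [hY]; exact Finset.sum_le_sum fun j' _ => hge j'
    rw [Finset.sum_sub_distrib, Finset.sum_const, card_univ, Fintype.card_fin,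
      nsmul_eq_mul] at hYlb
    have hSsum : S i j ≤ ∑ j', S i j' :=
      Finset.single_le_sum (fun j' _ => by rw [hS]; positivity) (mem_univ j)
    have hSij : Real.exp (C * (t:ℝ)) ≤ S i j := by
      rw [hS]; exact Real.exp_le_exp.mpr (mul_le_mul_of_nonneg_left hij hCpos.le)
    have key : Real.exp (C * (t:ℝ)) = Real.exp (C * ((t:ℝ)-1)) * (((n:ℝ)+2*μ)^2) := by
      rw [← hexpC, ← Real.exp_add]; ring_nf
    set E := Real.exp (C * ((t:ℝ)-1)) with hEdef
    have hsq : (0:ℝ) ≤ ((n:ℝ)+2*μ)^2 - (n:ℝ) := by nlinarith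
    have hprod : 1 * (((n:ℝ)+2*μ)^2 - (n:ℝ)) ≤ E * (((n:ℝ)+2*μ)^2 - (n:ℝ)) :=
      mul_le_mul_of_nonneg_right hE1 hsq
    nlinarith [hYlb, hSsum, hSij, key, hprod, hn2, hμ0]
  · rintro ⟨i, hi⟩
    by_contra hcon
    push_neg at hcon
    have hub : ∀ j, Shat i j ≤ Real.exp (C * ((t:ℝ)-1)) + μ := fun j => by
      obtain ⟨m, hm⟩ := dotp_nat (a i) (b j) (ha i) (hb j)
      have h1 : dotp (a i) (b j) ≤ (t:ℝ) - 1 := by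
        have h2 := hcon i j
        rw [hm] at h2 ⊢
        have hmt : m < t := by exact_mod_cast h2
        have : (m:ℝ) + 1 ≤ (t:ℝ) := by exact_mod_cast hmt
        linarith
      have hS' : S i j ≤ Real.exp (C * ((t:ℝ)-1)) := by
        rw [hS]; exact Real.exp_le_exp.mpr (mul_le_mul_of_nonneg_left h1 hCpos.le)
      have h := abs_le.mp (hShat i j)
      linarith [h.2]
    have hYub : Y i ≤ (n:ℝ) * (Real.exp (C * ((t:ℝ)-1)) + μ) := by
      rw [hY]
      calc ∑ j, Shat i j ≤ ∑ _j : Fin n, (Real.exp (C * ((t:ℝ)-1)) + μ) :=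
            Finset.sum_le_sum fun j _ => hub j
        _ = (n:ℝ) * (Real.exp (C * ((t:ℝ)-1)) + μ) := by
            rw [Finset.sum_const, card_univ, Fintype.card_fin, nsmul_eq_mul]
    nlinarith [hi, hYub]
end

section
/- Let n ≥ 2, d ≥ 1, let a_1,…,a_n, b_1,…,b_n ∈ {0,1}^d be binary vectors, and let t ≥ 1 be an integer. Set C = ln n + d and, for each i ∈ [n], define N_i = Σ_{j=1}^n exp(C · a_i^T b_j), D_i = Σ_{j=1}^n exp(a_i^T a_j), and Y_i = N_i / (D_i + N_i). Then there exist i, j ∈ [n] with a_i^T b_j ≥ t if and only if there exists i ∈ [n] with Y_i > exp(C(t−1)) / (exp(C(t−1)) + 1). -/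
open Finset Real

lemma dotp_int {d : ℕ} (x y : Fin d → ℝ) (hx : ∀ r, x r = 0 ∨ x r = 1)
    (hy : ∀ r, y r = 0 ∨ y r = 1) :
    ∃ m : ℕ, dotp x y = m ∧ m ≤ d := by
  have hterm : ∀ r, x r * y r = (if x r = 1 ∧ y r = 1 then (1:ℝ) else 0) := by
    intro r
    rcases hx r with h1 | h1 <;> rcases hy r with h2 | h2 <;> simp [h1, h2]
  refine ⟨∑ r, (if x r = 1 ∧ y r = 1 then 1 else 0 : ℕ), ?_, ?_⟩
  · rw [dotp]
    push_cast
    exact Finset.sum_congr rfl fun r _ => hterm r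
  · calc ∑ r, (if x r = 1 ∧ y r = 1 then 1 else 0 : ℕ)
        ≤ ∑ _r : Fin d, 1 := Finset.sum_le_sum fun r _ => by split <;> simp
    _ = d := by simp

lemma dotp_nonneg_s8 {d : ℕ} (x y : Fin d → ℝ) (hx : ∀ r, x r = 0 ∨ x r = 1)
    (hy : ∀ r, y r = 0 ∨ y r = 1) : 0 ≤ dotp x y := by
  obtain ⟨m, hm, -⟩ := dotp_int x y hx hy
  rw [hm]; positivity

lemma dotp_le {d : ℕ} (x y : Fin d → ℝ) (hx : ∀ r, x r = 0 ∨ x r = 1)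
    (hy : ∀ r, y r = 0 ∨ y r = 1) : dotp x y ≤ d := by
  obtain ⟨m, hm, hmd⟩ := dotp_int x y hx hy
  rw [hm]; exact_mod_cast hmd

/-- Case analysis (exact computation) underlying the reduction from TVPP to
softmax dot-product self-attention (Theorem 2). -/
theorem tvpp_softmax_exact (n d t : ℕ) (hn : 2 ≤ n) (hd : 1 ≤ d) (ht : 1 ≤ t)
    (a b : Fin n → Fin d → ℝ)
    (ha : ∀ i r, a i r = 0 ∨ a i r = 1) (hb : ∀ i r, b i r = 0 ∨ b i r = 1)
    (C : ℝ) (hC : C = Real.log n + d)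
    (N D Y : Fin n → ℝ)
    (hN : ∀ i, N i = ∑ j, Real.exp (C * dotp (a i) (b j)))
    (hD : ∀ i, D i = ∑ j, Real.exp (dotp (a i) (a j)))
    (hY : ∀ i, Y i = N i / (D i + N i)) :
    (∃ i j, (t : ℝ) ≤ dotp (a i) (b j)) ↔
      (∃ i, Y i > Real.exp (C * ((t : ℝ) - 1)) / (Real.exp (C * ((t : ℝ) - 1)) + 1)) := by
  have hn1 : (1 : ℝ) ≤ n := by exact_mod_cast hn.trans' (by norm_num)
  have hn0 : (0 : ℝ) < n := lt_of_lt_of_le one_pos hn1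
  have hC0 : 0 < C := by
    rw [hC]
    have h1 : 0 ≤ Real.log n := Real.log_nonneg hn1
    have h2 : (1 : ℝ) ≤ d := by exact_mod_cast hd
    linarith
  set E := Real.exp (C * ((t : ℝ) - 1)) with hE
  have hEpos : 0 < E := Real.exp_pos _
  haveI : Nonempty (Fin n) := ⟨⟨0, by omega⟩⟩
  have hNpos : ∀ i, 0 < N i := by
    intro i; rw [hN i]
    exact Finset.sum_pos (fun j _ => Real.exp_pos _) (Finset.univ_nonempty)
  have hDpos : ∀ i, 0 < D i := by
    intro i; rw [hD i]
    exact Finset.sum_pos (fun j _ => Real.exp_pos _) (Finset.univ_nonempty)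
  have hDenom : ∀ i, 0 < D i + N i := fun i => add_pos (hDpos i) (hNpos i)
  constructor
  · rintro ⟨i, j, hij⟩
    refine ⟨i, ?_⟩
    rw [hY i, gt_iff_lt, div_lt_div_iff₀ (by positivity) (hDenom i)]
    have key : E * D i < N i := by
      -- D i ≤ exp C
      have hDle : D i ≤ Real.exp C := by
        rw [hD i]
        calc ∑ j', Real.exp (dotp (a i) (a j'))
            ≤ ∑ _j' : Fin n, Real.exp d :=
              Finset.sum_le_sum fun j' _ =>
                Real.exp_le_exp.mpr (dotp_le (a i) (a j') (ha i) (ha j'))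
          _ = n * Real.exp d := by simp [mul_comm]
          _ = Real.exp C := by
              rw [hC, Real.exp_add, Real.exp_log hn0]
      -- exp (C * dotp) < N i strictly
      have hneq : ∃ j' : Fin n, j' ≠ j := by
        obtain ⟨j', hj'⟩ := Finset.exists_mem_ne
          (by rw [Finset.card_univ, Fintype.card_fin]; omega) j
        exact ⟨j', hj'.2⟩
      obtain ⟨j', hj'⟩ := hneq
      have hlt : Real.exp (C * dotp (a i) (b j)) < N i := by
        rw [hN i]
        exact Finset.single_lt_sum (f := fun k => Real.exp (C * dotp (a i) (b k))) hj'
          (Finset.mem_univ j) (Finset.mem_univ j')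
          (Real.exp_pos _) (fun k _ _ => (Real.exp_pos _).le)
      have h1 : E * D i ≤ E * Real.exp C :=
        mul_le_mul_of_nonneg_left hDle hEpos.le
      have h2 : E * Real.exp C = Real.exp (C * (t : ℝ)) := by
        rw [hE, ← Real.exp_add]; ring_nf
      have h3 : Real.exp (C * (t : ℝ)) ≤ Real.exp (C * dotp (a i) (b j)) :=
        Real.exp_le_exp.mpr (mul_le_mul_of_nonneg_left hij hC0.le)
      linarith
    nlinarith [hNpos i, hDpos i]
  · rintro ⟨i, hi⟩
    by_contra hcon
    push_neg at hcon
    have hNle : N i ≤ E * D i := by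
      have h1 : N i ≤ n * E := by
        rw [hN i]
        calc ∑ j, Real.exp (C * dotp (a i) (b j))
            ≤ ∑ _j : Fin n, E := by
              refine Finset.sum_le_sum fun j _ => ?_
              rw [hE]
              apply Real.exp_le_exp.mpr
              apply mul_le_mul_of_nonneg_left _ hC0.le
              obtain ⟨m, hm, -⟩ := dotp_int (a i) (b j) (ha i) (hb j)
              have := hcon i j
              rw [hm] at this ⊢
              have hmt : m < t := by exact_mod_cast this
              have : (m : ℝ) + 1 ≤ t := by exact_mod_cast hmt
              linarith
          _ = n * E := by simp [mul_comm]
      have h2 : (n : ℝ) ≤ D i := by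
        rw [hD i]
        calc (n : ℝ) = ∑ _j : Fin n, (1 : ℝ) := by simp
          _ ≤ ∑ j, Real.exp (dotp (a i) (a j)) := by
              refine Finset.sum_le_sum fun j _ => ?_
              rw [show (1:ℝ) = Real.exp 0 by simp]
              exact Real.exp_le_exp.mpr (dotp_nonneg_s8 (a i) (a j) (ha i) (ha j))
      nlinarith
    rw [hY i, gt_iff_lt, div_lt_div_iff₀ (by positivity) (hDenom i)] at hi
    nlinarith [hDpos i, hNpos i]
end

section
/- Let n ≥ 2, d ≥ 1, let a_1,…,a_n, b_1,…,b_n ∈ {0,1}^d be binary vectors, let t ≥ 1 be an integer, and let 0 ≤ μ < 1. Set C = ln(2(1+μ)n/(1−μ)) + d and, for each i ∈ [n], define N_i = Σ_{j=1}^n exp(C · a_i^T b_j), D_i = Σ_{j=1}^n exp(a_i^T a_j), and Z_i = D_i / (D_i + N_i). Suppose Ẑ_1,…,Ẑ_n are real numbers with |Ẑ_i − Z_i| ≤ μ |Z_i| for all i ∈ [n]. Then there exist i, j ∈ [n] with a_i^T b_j ≥ t if and only if there exists i ∈ [n] with Ẑ_i < (1−μ) / (exp(C(t−1)) + 1). 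-/
open Finset Real

lemma dotp_binary {d : ℕ} (x y : Fin d → ℝ)
    (hx : ∀ r, x r = 0 ∨ x r = 1) (hy : ∀ r, y r = 0 ∨ y r = 1) :
    ∃ k : ℕ, k ≤ d ∧ dotp x y = (k : ℝ) := by
  classical
  refine ⟨(Finset.univ.filter (fun r => x r = 1 ∧ y r = 1)).card, ?_, ?_⟩
  · exact le_trans (Finset.card_filter_le _ _) (by simp)
  · have h : dotp x y = ∑ r, (if x r = 1 ∧ y r = 1 then (1:ℝ) else 0) := by
      unfold dotp
      refine Finset.sum_congr rfl fun r _ => ?_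
      rcases hx r with h1 | h1 <;> rcases hy r with h2 | h2 <;> simp [h1, h2]
    rw [h, Finset.sum_boole]

set_option maxHeartbeats 1000000 in
/-- Case analysis (element-wise multiplicative approximation) underlying the
reduction from TVPP to softmax dot-product self-attention (Theorem 2). -/
theorem tvpp_softmax_mult_approx (n d t : ℕ) (hn : 2 ≤ n) (hd : 1 ≤ d) (ht : 1 ≤ t)
    (a b : Fin n → Fin d → ℝ)
    (ha : ∀ i r, a i r = 0 ∨ a i r = 1) (hb : ∀ i r, b i r = 0 ∨ b i r = 1)
    (μ : ℝ) (hμ0 : 0 ≤ μ) (hμ1 : μ < 1)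
    (C : ℝ) (hC : C = Real.log (2 * (1 + μ) * n / (1 - μ)) + d)
    (N D Z : Fin n → ℝ)
    (hN : ∀ i, N i = ∑ j, Real.exp (C * dotp (a i) (b j)))
    (hD : ∀ i, D i = ∑ j, Real.exp (dotp (a i) (a j)))
    (hZ : ∀ i, Z i = D i / (D i + N i))
    (Zhat : Fin n → ℝ)
    (hZhat : ∀ i, |Zhat i - Z i| ≤ μ * |Z i|) :
    (∃ i j, (t : ℝ) ≤ dotp (a i) (b j)) ↔
      (∃ i, Zhat i < (1 - μ) / (Real.exp (C * ((t : ℝ) - 1)) + 1)) := by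
  have hn0 : 0 < n := by omega
  have hnR : (2:ℝ) ≤ (n:ℝ) := by exact_mod_cast hn
  have hdR : (1:ℝ) ≤ (d:ℝ) := by exact_mod_cast hd
  have htR : (1:ℝ) ≤ (t:ℝ) := by exact_mod_cast ht
  have hμ' : (0:ℝ) < 1 - μ := by linarith
  set X : ℝ := 2 * (1 + μ) * n / (1 - μ) with hX
  clear_value X
  have hXpos : 0 < X := by
    rw [hX]
    apply div_pos _ hμ'
    nlinarith [mul_nonneg hμ0 (by linarith : (0:ℝ) ≤ (n:ℝ))]
  have hX1 : 1 ≤ X := by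
    rw [hX, le_div_iff₀ hμ']
    nlinarith [mul_nonneg hμ0 (by linarith : (0:ℝ) ≤ (n:ℝ))]
  have hXmul : (1 - μ) * X = 2 * (1 + μ) * n := by
    rw [hX]; field_simp
  have hC0 : 0 ≤ C := by
    have := Real.log_nonneg hX1
    rw [hC]; linarith
  have hexpC : Real.exp C = X * Real.exp d := by
    rw [hC, Real.exp_add, Real.exp_log hXpos]
  set E : ℝ := Real.exp (C * ((t : ℝ) - 1)) with hE
  clear_value E
  have hE1 : 1 ≤ E := by
    rw [hE]; exact Real.one_le_exp (mul_nonneg hC0 (by linarith))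
  have hEpos : (0:ℝ) < E := lt_of_lt_of_le one_pos hE1
  have hexpd : (0:ℝ) < Real.exp d := Real.exp_pos _
  have hDpos : ∀ i, 0 < D i := fun i => by
    rw [hD]
    exact Finset.sum_pos (fun j _ => Real.exp_pos _) ⟨⟨0, hn0⟩, Finset.mem_univ _⟩
  have hNpos : ∀ i, 0 < N i := fun i => by
    rw [hN]
    exact Finset.sum_pos (fun j _ => Real.exp_pos _) ⟨⟨0, hn0⟩, Finset.mem_univ _⟩
  have hsum : ∀ i, 0 < D i + N i := fun i => by linarith [hDpos i, hNpos i]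
  have hZpos : ∀ i, 0 < Z i := fun i => by
    rw [hZ]; exact div_pos (hDpos i) (hsum i)
  have hZb : ∀ i, (1 - μ) * Z i ≤ Zhat i ∧ Zhat i ≤ (1 + μ) * Z i := fun i => by
    have h := hZhat i
    rw [abs_of_pos (hZpos i)] at h
    have h' := abs_le.mp h
    constructor <;> linarith [h'.1, h'.2]
  have hab : ∀ i j, ∃ k : ℕ, k ≤ d ∧ dotp (a i) (b j) = (k : ℝ) :=
    fun i j => dotp_binary _ _ (ha i) (hb j)
  have haa : ∀ i j, 0 ≤ dotp (a i) (a j) ∧ dotp (a i) (a j) ≤ (d:ℝ) := fun i j => by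
    obtain ⟨k, hk, hkeq⟩ := dotp_binary _ _ (ha i) (ha j)
    constructor
    · rw [hkeq]; positivity
    · rw [hkeq]; exact_mod_cast hk
  have hDub : ∀ i, D i ≤ n * Real.exp d := fun i => by
    rw [hD]
    calc ∑ j, Real.exp (dotp (a i) (a j)) ≤ ∑ _j : Fin n, Real.exp d :=
          Finset.sum_le_sum fun j _ => Real.exp_le_exp.2 (haa i j).2
      _ = n * Real.exp d := by simp [mul_comm]
  have hDlb : ∀ i, (n:ℝ) ≤ D i := fun i => by
    rw [hD]
    calc (n:ℝ) = ∑ _j : Fin n, (1:ℝ) := by simp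
      _ ≤ ∑ j, Real.exp (dotp (a i) (a j)) :=
          Finset.sum_le_sum fun j _ => Real.one_le_exp (haa i j).1
  constructor
  · rintro ⟨i, j, hij⟩
    refine ⟨i, ?_⟩
    have hNlb : Real.exp (C * (t:ℝ)) ≤ N i := by
      rw [hN]
      calc Real.exp (C * (t:ℝ)) ≤ Real.exp (C * dotp (a i) (b j)) :=
            Real.exp_le_exp.2 (mul_le_mul_of_nonneg_left hij hC0)
        _ ≤ ∑ j', Real.exp (C * dotp (a i) (b j')) :=
            Finset.single_le_sum (f := fun j' => Real.exp (C * dotp (a i) (b j')))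
              (fun j' _ => (Real.exp_pos _).le) (Finset.mem_univ j)
    have hct : Real.exp (C * (t:ℝ)) = E * (X * Real.exp d) := by
      rw [hE, ← hexpC, ← Real.exp_add]
      congr 1; ring
    have h1 : 2 * (1 + μ) * n * Real.exp d * E ≤ (1 - μ) * N i := by
      calc 2 * (1 + μ) * n * Real.exp d * E = (1 - μ) * X * Real.exp d * E := by
            rw [hXmul]
        _ = (1 - μ) * Real.exp (C * (t:ℝ)) := by rw [hct]; ring
        _ ≤ (1 - μ) * N i := mul_le_mul_of_nonneg_left hNlb hμ'.le
    have hub := (hZb i).2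
    have key : (1 + μ) * Z i < (1 - μ) / (E + 1) := by
      rw [hZ i, ← mul_div_assoc, div_lt_div_iff₀ (hsum i) (by linarith : (0:ℝ) < E + 1)]
      nlinarith [h1, hDub i, hDpos i, hexpd,
        mul_nonneg (sub_nonneg.2 (hDub i)) hEpos.le,
        mul_nonneg (sub_nonneg.2 hE1) (hDpos i).le,
        mul_pos hμ' (hDpos i)]
    linarith
  · rintro ⟨i, hi⟩
    by_contra hno
    push_neg at hno
    have hdle : ∀ j, dotp (a i) (b j) ≤ (t:ℝ) - 1 := fun j => by
      obtain ⟨k, hk, hkeq⟩ := hab i j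
      have h1 : (k:ℝ) < t := by rw [← hkeq]; exact hno i j
      have h2 : k < t := by exact_mod_cast h1
      have h3 : k + 1 ≤ t := h2
      have h4 : ((k:ℝ)) + 1 ≤ (t:ℝ) := by exact_mod_cast h3
      rw [hkeq]; linarith
    have hNub : N i ≤ n * E := by
      rw [hN]
      calc ∑ j, Real.exp (C * dotp (a i) (b j)) ≤ ∑ _j : Fin n, E :=
            Finset.sum_le_sum fun j _ => by
              rw [hE]; exact Real.exp_le_exp.2 (mul_le_mul_of_nonneg_left (hdle j) hC0)
        _ = n * E := by simp [mul_comm]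
    have hDEN : N i ≤ D i * E := by
      nlinarith [mul_nonneg (sub_nonneg.2 (hDlb i)) hEpos.le]
    have hlb := (hZb i).1
    have key : (1 - μ) / (E + 1) ≤ (1 - μ) * Z i := by
      rw [hZ i, ← mul_div_assoc, div_le_div_iff₀ (by linarith : (0:ℝ) < E + 1) (hsum i)]
      nlinarith [mul_le_mul_of_nonneg_left hDEN hμ'.le]
    linarith
end

section
/- Let n ≥ 2, d ≥ 1, let a_1,…,a_n, b_1,…,b_n ∈ {0,1}^d be binary vectors, and let t ≥ 1 be an integer. Set C = 2 ln n and, for each i ∈ [n], define Y_i = Σ_{j=1}^n exp(−C · ‖a_i − b_j‖₂²). Then there exist i, j ∈ [n] with ‖a_i − b_j‖₂² ≤ t − 1 if and only if there exists i ∈ [n] with Y_i > n · exp(−Ct). -/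
open Finset Real

set_option maxHeartbeats 1000000

lemma sqdist_exists_nat {d : ℕ} (x y : Fin d → ℝ)
    (hx : ∀ r, x r = 0 ∨ x r = 1) (hy : ∀ r, y r = 0 ∨ y r = 1) :
    ∃ m : ℕ, sqdist x y = m := by
  classical
  refine ⟨(Finset.univ.filter (fun r => x r ≠ y r)).card, ?_⟩
  unfold sqdist
  rw [Finset.card_filter]
  push_cast
  apply Finset.sum_congr rfl
  intro r _
  rcases hx r with h1 | h1 <;> rcases hy r with h2 | h2 <;> simp [h1, h2]

/-- Case analysis (exact computation) underlying the reduction from BHCP to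
ℓ₂ (RBF-kernel) self-attention (Theorem 4). -/
theorem bhcp_l2_exact (n d t : ℕ) (hn : 2 ≤ n) (hd : 1 ≤ d) (ht : 1 ≤ t)
    (a b : Fin n → Fin d → ℝ)
    (ha : ∀ i r, a i r = 0 ∨ a i r = 1) (hb : ∀ i r, b i r = 0 ∨ b i r = 1)
    (C : ℝ) (hC : C = 2 * Real.log n)
    (Y : Fin n → ℝ)
    (hY : ∀ i, Y i = ∑ j, Real.exp (-C * sqdist (a i) (b j))) :
    (∃ i j, sqdist (a i) (b j) ≤ (t : ℝ) - 1) ↔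
      (∃ i, Y i > (n : ℝ) * Real.exp (-C * (t : ℝ))) := by
  have hn1 : (1 : ℝ) < (n : ℝ) := by exact_mod_cast Nat.lt_of_lt_of_le one_lt_two hn
  have hn0 : (0 : ℝ) < (n : ℝ) := lt_trans one_pos hn1
  have hlog : 0 < Real.log n := Real.log_pos hn1
  have hCpos : 0 < C := by rw [hC]; linarith
  have hexpC : Real.exp C = (n : ℝ) * (n : ℝ) := by
    rw [hC, two_mul, Real.exp_add, Real.exp_log hn0]
  constructor
  · rintro ⟨i, j, hij⟩
    refine ⟨i, ?_⟩
    rw [hY i]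
    set s : ℝ := sqdist (a i) (b j) with hs
    have h1 : Real.exp (-C * s) ≤ ∑ k, Real.exp (-C * sqdist (a i) (b k)) :=
      Finset.single_le_sum (f := fun k => Real.exp (-C * sqdist (a i) (b k))) (fun k _ => (Real.exp_pos _).le) (Finset.mem_univ j)
    have e1 : Real.exp (-C * ((t : ℝ) - 1)) = Real.exp C * Real.exp (-C * (t : ℝ)) := by
      rw [← Real.exp_add]; ring_nf
    have h3 : Real.exp (-C * ((t : ℝ) - 1)) ≤ Real.exp (-C * s) := by
      apply Real.exp_le_exp.mpr; nlinarith
    have h4 : (n : ℝ) * Real.exp (-C * (t : ℝ)) < Real.exp C * Real.exp (-C * (t : ℝ)) := by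
      rw [hexpC]
      have : (n : ℝ) < (n : ℝ) * (n : ℝ) := by nlinarith
      exact mul_lt_mul_of_pos_right this (Real.exp_pos _)
    calc (n : ℝ) * Real.exp (-C * (t : ℝ)) < Real.exp (-C * ((t : ℝ) - 1)) := by
          rw [e1]; exact h4
      _ ≤ Real.exp (-C * s) := h3
      _ ≤ _ := h1
  · rintro ⟨i, hi⟩
    by_contra h
    push_neg at h
    have hupper : Y i ≤ (n : ℝ) * Real.exp (-C * (t : ℝ)) := by
      rw [hY i]
      have hterm : ∀ j : Fin n, Real.exp (-C * sqdist (a i) (b j)) ≤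
          Real.exp (-C * (t : ℝ)) := by
        intro j
        apply Real.exp_le_exp.mpr
        obtain ⟨m, hm⟩ := sqdist_exists_nat (a i) (b j) (ha i) (hb j)
        have h' := h i j
        rw [hm] at h' ⊢
        have hmt : t ≤ m := by
          by_contra hc
          push_neg at hc
          have hm1 : (m : ℝ) + 1 ≤ (t : ℝ) := by exact_mod_cast hc
          linarith
        have : (t : ℝ) ≤ (m : ℝ) := by exact_mod_cast hmt
        nlinarith
      calc ∑ j, Real.exp (-C * sqdist (a i) (b j))
          ≤ ∑ _j : Fin n, Real.exp (-C * (t : ℝ)) :=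
            Finset.sum_le_sum (fun j _ => hterm j)
        _ = (n : ℝ) * Real.exp (-C * (t : ℝ)) := by
            rw [Finset.sum_const, Finset.card_univ, Fintype.card_fin, nsmul_eq_mul]
    exact absurd hi (not_lt.mpr hupper)
end

section
/- Let n ≥ 2, d ≥ 1, let a_1,…,a_n, b_1,…,b_n ∈ {0,1}^d be binary vectors, let t ≥ 1 be an integer, and let 0 ≤ μ < 1. Set C = 2 ln((1+μ)n/(1−μ)) and, for each i ∈ [n], define Y_i = Σ_{j=1}^n exp(−C · ‖a_i − b_j‖₂²). Suppose Ŷ_1,…,Ŷ_n are real numbers with |Ŷ_i − Y_i| ≤ μ |Y_i| for all i ∈ [n]. Then there exist i, j ∈ [n] with ‖a_i − b_j‖₂² ≤ t − 1 if and only if there exists i ∈ [n] with Ŷ_i > (1+μ) n · exp(−Ct). -/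
/-! Squared distances of binary vectors are integers, so either some pair `a i`, `b j` is within
`t - 1` or all pairs are at distance at least `t`. In the first case `Y i ≥ exp (-C (t - 1))`, in
the second `Y i ≤ n exp (-C t)` for every `i`, and `C` is chosen so large that these bounds stay
separated after distorting them by the factors `1 - μ` and `1 + μ`. -/

open Finset Real

lemma sqdist_eq_natCast_of_binary {d : ℕ} {x y : Fin d → ℝ}
    (hx : ∀ r, x r = 0 ∨ x r = 1) (hy : ∀ r, y r = 0 ∨ y r = 1) :
    sqdist x y = ((#{r | x r ≠ y r} : ℕ) : ℝ) := by
  rw [sqdist, card_filter, Nat.cast_sum]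
  refine sum_congr rfl fun r _ => ?_
  rcases hx r with h₁ | h₁ <;> rcases hy r with h₂ | h₂ <;> norm_num [h₁, h₂]

lemma sqdist_le_sub_one_or_le_of_binary {d : ℕ} {x y : Fin d → ℝ}
    (hx : ∀ r, x r = 0 ∨ x r = 1) (hy : ∀ r, y r = 0 ∨ y r = 1) (t : ℕ) :
    sqdist x y ≤ t - 1 ∨ (t : ℝ) ≤ sqdist x y := by
  rw [sqdist_eq_natCast_of_binary hx hy]
  rcases Nat.lt_or_ge #{r | x r ≠ y r} t with h | h
  · left
    have : ((#{r | x r ≠ y r} + 1 : ℕ) : ℝ) ≤ t := by exact_mod_cast h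
    push_cast at this
    linarith
  · exact Or.inr (by exact_mod_cast h)

section Approximation

variable {μ y ŷ : ℝ}

lemma one_sub_mul_le_of_abs_sub_le_mul (hy : 0 ≤ y) (h : |ŷ - y| ≤ μ * |y|) :
    (1 - μ) * y ≤ ŷ := by
  rw [abs_of_nonneg hy] at h
  linarith [neg_abs_le (ŷ - y)]

lemma le_one_add_mul_of_abs_sub_le_mul (hy : 0 ≤ y) (h : |ŷ - y| ≤ μ * |y|) :
    ŷ ≤ (1 + μ) * y := by
  rw [abs_of_nonneg hy] at h
  linarith [le_abs_self (ŷ - y)]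

end Approximation

section KernelSum

variable {ι : Type*} [Fintype ι] {C : ℝ} {D : ι → ℝ}

lemma exp_neg_mul_le_sum_exp_neg_mul (hC : 0 ≤ C) {s : ℝ} {j : ι} (hj : D j ≤ s) :
    exp (-C * s) ≤ ∑ k, exp (-C * D k) :=
  calc exp (-C * s) ≤ exp (-C * D j) := exp_le_exp.2 (by nlinarith)
    _ ≤ ∑ k, exp (-C * D k) :=
      single_le_sum (f := fun k => exp (-C * D k)) (fun _ _ => (exp_pos _).le) (mem_univ j)

lemma sum_exp_neg_mul_le_card_mul (hC : 0 ≤ C) {s : ℝ} (hD : ∀ k, s ≤ D k) :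
    ∑ k, exp (-C * D k) ≤ Fintype.card ι * exp (-C * s) :=
  calc ∑ k, exp (-C * D k) ≤ ∑ _k : ι, exp (-C * s) :=
        sum_le_sum fun k _ => exp_le_exp.2 (by nlinarith [hD k])
    _ = Fintype.card ι * exp (-C * s) := by simp

end KernelSum

/-- One unit of distance costs a factor `exp C = (p / q)²`: one factor `p / q` already turns
`q` into `p`, the second one `> 1` makes the inequality strict. -/
lemma mul_exp_neg_mul_lt_of_eq_two_log {p q C : ℝ} (hq : 0 < q) (hqp : q < p)
    (hC : C = 2 * log (p / q)) (s : ℝ) :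
    p * exp (-C * s) < q * exp (-C * (s - 1)) := by
  have hp : 0 < p := hq.trans hqp
  have hexpC : exp C = (p / q) ^ 2 := by
    rw [hC, mul_comm, exp_mul, exp_log (div_pos hp hq)]
    norm_num
  have hshift : exp (-C * (s - 1)) = exp (-C * s) * (p / q) ^ 2 := by
    rw [← hexpC, ← exp_add]
    ring_nf
  have hfactor : p < q * (p / q) ^ 2 :=
    calc p = p * 1 := (mul_one p).symm
      _ < p * (p / q) := mul_lt_mul_of_pos_left ((one_lt_div hq).2 hqp) hp
      _ = q * (p / q) ^ 2 := by field_simp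
  rw [hshift]
  linarith [mul_lt_mul_of_pos_right hfactor (exp_pos (-C * s))]

theorem bhcp_l2_mult_approx_general (n d t : ℕ) (hn : 2 ≤ n)
    (a b : Fin n → Fin d → ℝ)
    (ha : ∀ i r, a i r = 0 ∨ a i r = 1) (hb : ∀ i r, b i r = 0 ∨ b i r = 1)
    (μ : ℝ) (hμ0 : 0 ≤ μ) (hμ1 : μ < 1)
    (C : ℝ) (hC : C = 2 * Real.log ((1 + μ) * n / (1 - μ)))
    (Y : Fin n → ℝ)
    (hY : ∀ i, Y i = ∑ j, Real.exp (-C * sqdist (a i) (b j)))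
    (Yhat : Fin n → ℝ)
    (hYhat : ∀ i, |Yhat i - Y i| ≤ μ * |Y i|) :
    (∃ i j, sqdist (a i) (b j) ≤ (t : ℝ) - 1) ↔
      (∃ i, Yhat i > (1 + μ) * (n : ℝ) * Real.exp (-C * (t : ℝ))) := by
  have hq : 0 < 1 - μ := by linarith
  have hqp : 1 - μ < (1 + μ) * n := by
    have : (2 : ℝ) ≤ n := by exact_mod_cast hn
    nlinarith
  have hC0 : 0 ≤ C := hC ▸ mul_nonneg zero_le_two (log_nonneg ((one_le_div hq).2 hqp.le))
  have hgap := mul_exp_neg_mul_lt_of_eq_two_log hq hqp hC t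
  have hY0 : ∀ i, 0 ≤ Y i := fun i => hY i ▸ sum_nonneg fun _ _ => (exp_pos _).le
  constructor
  · rintro ⟨i, j, hij⟩
    refine ⟨i, ?_⟩
    calc (1 + μ) * n * exp (-C * t) < (1 - μ) * exp (-C * (t - 1)) := hgap
      _ ≤ (1 - μ) * Y i := by
        rw [hY i]
        exact mul_le_mul_of_nonneg_left (exp_neg_mul_le_sum_exp_neg_mul hC0 hij) hq.le
      _ ≤ Yhat i := one_sub_mul_le_of_abs_sub_le_mul (hY0 i) (hYhat i)
  · rintro ⟨i, hi⟩
    by_contra! hfar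
    have hall : ∀ j, (t : ℝ) ≤ sqdist (a i) (b j) := fun j =>
      (sqdist_le_sub_one_or_le_of_binary (ha i) (hb j) t).resolve_left (not_le.2 (hfar i j))
    have hYi : Y i ≤ n * exp (-C * t) := by
      simpa [hY i] using sum_exp_neg_mul_le_card_mul hC0 hall
    have hYhat_le := le_one_add_mul_of_abs_sub_le_mul (hY0 i) (hYhat i)
    linarith [mul_le_mul_of_nonneg_left hYi (by linarith : 0 ≤ 1 + μ)]

/-- Case analysis (element-wise multiplicative approximation) underlying the
reduction from BHCP to ℓ₂ (RBF-kernel) self-attention (Theorem 4). -/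
theorem bhcp_l2_mult_approx (n d t : ℕ) (hn : 2 ≤ n) (hd : 1 ≤ d) (ht : 1 ≤ t)
    (a b : Fin n → Fin d → ℝ)
    (ha : ∀ i r, a i r = 0 ∨ a i r = 1) (hb : ∀ i r, b i r = 0 ∨ b i r = 1)
    (μ : ℝ) (hμ0 : 0 ≤ μ) (hμ1 : μ < 1)
    (C : ℝ) (hC : C = 2 * Real.log ((1 + μ) * n / (1 - μ)))
    (Y : Fin n → ℝ)
    (hY : ∀ i, Y i = ∑ j, Real.exp (-C * sqdist (a i) (b j)))
    (Yhat : Fin n → ℝ)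
    (hYhat : ∀ i, |Yhat i - Y i| ≤ μ * |Y i|) :
    (∃ i j, sqdist (a i) (b j) ≤ (t : ℝ) - 1) ↔
      (∃ i, Yhat i > (1 + μ) * (n : ℝ) * Real.exp (-C * (t : ℝ))) :=
  bhcp_l2_mult_approx_general n d t hn a b ha hb μ hμ0 hμ1 C hC Y hY Yhat hYhat
end

section
/- Let n ≥ 1, d ≥ 1, let a_1,…,a_n, b_1,…,b_n ∈ {0,1}^d be binary vectors, let t be an integer with 1 ≤ t ≤ d, and let μ be a real number with 0 ≤ μ ≤ (n+2)^{−2d}. Set C = 2 ln(n+2) and, for each i ∈ [n], define Y_i = Σ_{j=1}^n exp(−C · ‖a_i − b_j‖₂²). Suppose Ŷ_1,…,Ŷ_n are real numbers with |Ŷ_i − Y_i| ≤ μ for all i ∈ [n]. Then there exist i, j ∈ [n] with ‖a_i − b_j‖₂² ≤ t − 1 if and only if there exists i ∈ [n] with Ŷ_i > n · exp(−Ct) + μ. -/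
open Finset Real

lemma sqdist_nat {d : ℕ} (x y : Fin d → ℝ) (hx : ∀ r, x r = 0 ∨ x r = 1)
    (hy : ∀ r, y r = 0 ∨ y r = 1) : ∃ k : ℕ, sqdist x y = k := by
  refine ⟨(Finset.univ.filter (fun r => x r ≠ y r)).card, ?_⟩
  rw [Finset.card_filter]
  push_cast
  unfold sqdist
  refine Finset.sum_congr rfl fun r _ => ?_
  rcases hx r with h1 | h1 <;> rcases hy r with h2 | h2 <;>
    simp [h1, h2] <;> norm_num

/-- Case analysis underlying Appendix Theorem 5: ℓ₂ (RBF-kernel) self-attention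
with element-wise additive error at most `(n+2)^(-2d)`. -/
theorem bhcp_l2_add_approx (n d t : ℕ) (hn : 1 ≤ n) (hd : 1 ≤ d)
    (ht1 : 1 ≤ t) (htd : t ≤ d)
    (a b : Fin n → Fin d → ℝ)
    (ha : ∀ i r, a i r = 0 ∨ a i r = 1) (hb : ∀ i r, b i r = 0 ∨ b i r = 1)
    (μ : ℝ) (hμ0 : 0 ≤ μ) (hμub : μ ≤ ((n : ℝ) + 2) ^ (-(2 * (d : ℤ))))
    (C : ℝ) (hC : C = 2 * Real.log ((n : ℝ) + 2))
    (Y : Fin n → ℝ)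
    (hY : ∀ i, Y i = ∑ j, Real.exp (-C * sqdist (a i) (b j)))
    (Yhat : Fin n → ℝ)
    (hYhat : ∀ i, |Yhat i - Y i| ≤ μ) :
    (∃ i j, sqdist (a i) (b j) ≤ (t : ℝ) - 1) ↔
      (∃ i, Yhat i > (n : ℝ) * Real.exp (-C * (t : ℝ)) + μ) := by
  have hn1 : (1:ℝ) ≤ (n:ℝ) := by exact_mod_cast hn
  have hN1 : (1:ℝ) < (n:ℝ) + 2 := by linarith
  have hN0 : (0:ℝ) < (n:ℝ) + 2 := by linarith
  have hlog : 0 < Real.log ((n:ℝ)+2) := Real.log_pos hN1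
  have hCpos : 0 < C := by rw [hC]; linarith
  have hexpC : Real.exp C = ((n:ℝ)+2)^2 := by
    rw [hC, two_mul, Real.exp_add, Real.exp_log hN0, sq]
  set E := Real.exp (-C * (t:ℝ)) with hE
  have hEpos : 0 < E := Real.exp_pos _
  have hμE : μ ≤ E := by
    refine hμub.trans ?_
    have h1 : ((n:ℝ)+2) ^ (-(2 * (d:ℤ))) = Real.exp (-C * (d:ℝ)) := by
      rw [zpow_neg, show (2*(d:ℤ)) = ((2*d:ℕ):ℤ) by push_cast; ring, zpow_natCast,
        neg_mul, Real.exp_neg, mul_comm C, Real.exp_nat_mul, hexpC, ← pow_mul]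
    rw [h1]
    apply Real.exp_le_exp.mpr
    have htd' : (t:ℝ) ≤ (d:ℝ) := by exact_mod_cast htd
    have := mul_le_mul_of_nonneg_left htd' hCpos.le
    linarith
  constructor
  · rintro ⟨i, j, hij⟩
    refine ⟨i, ?_⟩
    have hterm : Real.exp (-C * ((t:ℝ)-1)) ≤ Real.exp (-C * sqdist (a i) (b j)) := by
      apply Real.exp_le_exp.mpr
      have := mul_le_mul_of_nonneg_left hij hCpos.le
      linarith
    have hYi : Real.exp (-C * ((t:ℝ)-1)) ≤ Y i := by
      rw [hY i]
      calc Real.exp (-C * ((t:ℝ)-1)) ≤ Real.exp (-C * sqdist (a i) (b j)) := hterm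
        _ ≤ ∑ j', Real.exp (-C * sqdist (a i) (b j')) :=
          Finset.single_le_sum (f := fun j' => Real.exp (-C * sqdist (a i) (b j')))
            (fun _ _ => (Real.exp_pos _).le) (Finset.mem_univ j)
    have hexp1 : Real.exp (-C * ((t:ℝ)-1)) = ((n:ℝ)+2)^2 * E := by
      rw [show -C * ((t:ℝ)-1) = C + (-C * (t:ℝ)) by ring, Real.exp_add, hexpC, hE]
    rw [hexp1] at hYi
    have hlow : Y i - μ ≤ Yhat i := by
      have := abs_le.mp (hYhat i); linarith [this.1]
    have hkey : (0:ℝ) < ((n:ℝ)^2 + 3*(n:ℝ) + 2) * E := by positivity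
    have e1 : ((n:ℝ)+2)^2 * E = (n:ℝ)*E + ((n:ℝ)^2+3*(n:ℝ)+2)*E + 2*E := by ring
    linarith
  · rintro ⟨i, hi⟩
    by_contra hcon
    push_neg at hcon
    have hYle : Y i ≤ (n:ℝ) * E := by
      rw [hY i]
      calc ∑ j, Real.exp (-C * sqdist (a i) (b j)) ≤ ∑ _j : Fin n, E := by
            apply Finset.sum_le_sum (f := fun j => Real.exp (-C * sqdist (a i) (b j)))
              (g := fun _ => E)
            intro j _
            apply Real.exp_le_exp.mpr
            obtain ⟨k, hk⟩ := sqdist_nat (a i) (b j) (ha i) (hb j)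
            have h1 : (t:ℝ) - 1 < sqdist (a i) (b j) := hcon i j
            have h2 : (t:ℝ) ≤ sqdist (a i) (b j) := by
              rw [hk] at h1 ⊢
              have : (t:ℝ) < (k:ℝ) + 1 := by linarith
              have htk : t ≤ k := Nat.lt_succ_iff.mp (by exact_mod_cast this)
              exact_mod_cast htk
            have := mul_le_mul_of_nonneg_left h2 hCpos.le
            linarith
        _ = (n:ℝ) * E := by simp [Finset.card_univ, mul_comm]
    have hup : Yhat i ≤ Y i + μ := by
      have := abs_le.mp (hYhat i); linarith [this.2]
    linarith
end

section
/- Let n ≥ 2, d ≥ 1, let a_1,…,a_n, b_1,…,b_n ∈ {0,1}^d be binary vectors, let t be an integer with 1 ≤ t ≤ d, and let μ be a real number with 0 ≤ μ ≤ n^{−3d} e^{−3d²}. Set C = ln n + d and, for each i ∈ [n], define N_i = Σ_{j=1}^n exp(C · a_i^T b_j), D_i = Σ_{j=1}^n exp(a_i^T a_j), and Y_i = N_i / (D_i + N_i). Suppose Ŷ_1,…,Ŷ_n are real numbers with |Ŷ_i − Y_i| ≤ μ for all i ∈ [n]. Then there exist i, j ∈ [n] with a_i^T b_j ≥ t if and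 only if there exists i ∈ [n] with Ŷ_i > exp(C(t−1)) / (exp(C(t−1)) + 1) + μ. -/
open Finset Real

/-!
For binary vectors every dot product is an integer in `[0, d]`. Put `E = exp C = n e^d` and
`A = exp (C (t - 1)) = E^(t-1)`. If no pair reaches `t`, every `N_i ≤ n A ≤ A D_i`, so
`Y_i ≤ A / (A + 1)`. If `a_iᵀ b_j ≥ t`, then `N_i ≥ A E + 1` (a second key has weight at
least `1`) and `D_i ≤ E`, so `Y_i ≥ (A E + 1) / (E + A E + 1)`, which exceeds `A / (A + 1)` by
exactly `1 / ((A + 1) (E + A E + 1)) ≥ E^(1-2d) / 6`. Since `μ ≤ E^(-3d)` and `E ≥ 4`, this gap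
is more than `2μ`, so the threshold `A / (A + 1) + μ` separates the two cases.
-/

section BinaryDot

variable {d : ℕ} {x y : Fin d → ℝ}

theorem dotp_eq_card (hx : ∀ r, x r = 0 ∨ x r = 1) (hy : ∀ r, y r = 0 ∨ y r = 1) :
    dotp x y = #{r | x r = 1 ∧ y r = 1} := by
  rw [dotp, ← sum_boole]
  refine sum_congr rfl fun r _ => ?_
  rcases hx r with h | h <;> rcases hy r with h' | h' <;> simp [h, h']

theorem dotp_nonneg_of_binary (hx : ∀ r, x r = 0 ∨ x r = 1) (hy : ∀ r, y r = 0 ∨ y r = 1) :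
    0 ≤ dotp x y := by
  rw [dotp_eq_card hx hy]
  positivity

theorem dotp_le_of_binary (hx : ∀ r, x r = 0 ∨ x r = 1) (hy : ∀ r, y r = 0 ∨ y r = 1) :
    dotp x y ≤ d := by
  rw [dotp_eq_card hx hy]
  exact_mod_cast (card_le_univ _).trans_eq (Fintype.card_fin d)

theorem dotp_le_sub_one_of_lt {t : ℕ} (hx : ∀ r, x r = 0 ∨ x r = 1)
    (hy : ∀ r, y r = 0 ∨ y r = 1) (h : dotp x y < t) : dotp x y ≤ (t : ℝ) - 1 := by
  rw [dotp_eq_card hx hy] at h ⊢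
  rw [le_sub_iff_add_le]
  exact_mod_cast Nat.add_one_le_of_lt (by exact_mod_cast h)

end BinaryDot

theorem div_add_le_div_add_one_of_le_mul {x y e : ℝ} (hx : 0 ≤ x) (hy : 0 < y) (he : 0 ≤ e)
    (h : x ≤ e * y) : x / (y + x) ≤ e / (e + 1) := by
  rw [div_le_div_iff₀ (by positivity) (by positivity)]
  nlinarith

theorem div_add_le_div_add {x x' y y' : ℝ} (hx : 0 < x) (hy' : 0 ≤ y') (hxx : x ≤ x')
    (hyy : y' ≤ y) : x / (y + x) ≤ x' / (y' + x') := by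
  rw [div_le_div_iff₀ (by linarith) (by linarith)]
  nlinarith [mul_le_mul hxx hyy hy' (by linarith)]

theorem div_add_one_add_two_mul_lt {A E μ : ℝ} {d : ℕ} (hd : 1 ≤ d) (hE : 4 ≤ E) (hA0 : 0 ≤ A)
    (hA : A ≤ E ^ (d - 1)) (hμ : μ ≤ (E ^ (3 * d))⁻¹) :
    A / (A + 1) + 2 * μ < (A * E + 1) / (E + (A * E + 1)) := by
  have hgap : (A * E + 1) / (E + (A * E + 1))
      = A / (A + 1) + 1 / ((A + 1) * (E + (A * E + 1))) := by
    field_simp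
    ring
  rw [hgap, add_lt_add_iff_left, lt_div_iff₀ (by positivity)]
  obtain ⟨k, rfl⟩ : ∃ k, d = k + 1 := ⟨d - 1, by omega⟩
  rw [Nat.add_sub_cancel] at hA
  have hEk : 1 ≤ E ^ k := one_le_pow₀ (by linarith)
  have hA1 : A + 1 ≤ 2 * E ^ k := by linarith
  have hden : (A + 1) * (E + (A * E + 1)) ≤ 6 * E ^ (2 * k + 1) := by
    have hrest : E + (A * E + 1) ≤ 3 * E ^ (k + 1) := by
      rw [pow_succ]
      nlinarith
    calc (A + 1) * (E + (A * E + 1)) ≤ (2 * E ^ k) * (3 * E ^ (k + 1)) :=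
          mul_le_mul hA1 hrest (by positivity) (by positivity)
      _ = 6 * E ^ (2 * k + 1) := by ring
  have hE16 : 16 ≤ E ^ (k + 2) :=
    calc (16 : ℝ) = 4 ^ 2 := by norm_num
      _ ≤ E ^ 2 := by gcongr
      _ ≤ E ^ (k + 2) := pow_le_pow_right₀ (by linarith) (by omega)
  calc 2 * μ * ((A + 1) * (E + (A * E + 1)))
      ≤ 2 * (E ^ (3 * (k + 1)))⁻¹ * (6 * E ^ (2 * k + 1)) := by gcongr
    _ = 12 / E ^ (k + 2) := by
        field_simp
        ring
    _ ≤ 12 / 16 := by gcongr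
    _ < 1 := by norm_num

/-- `Y_i = N_i / (D_i + N_i)` is `attnEntry C p q` with `p j = a_iᵀ a_j` and `q j = a_iᵀ b_j`. -/
noncomputable def attnEntry {n : ℕ} (C : ℝ) (p q : Fin n → ℝ) : ℝ :=
  (∑ j, exp (C * q j)) / (∑ j, exp (p j) + ∑ j, exp (C * q j))

section AttnEntry

variable {n : ℕ} {C s : ℝ} {p q : Fin n → ℝ}

theorem attnEntry_le (hn : 0 < n) (hC : 0 ≤ C) (hp : ∀ j, 0 ≤ p j) (hq : ∀ j, q j ≤ s) :
    attnEntry C p q ≤ exp (C * s) / (exp (C * s) + 1) := by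
  have : Nonempty (Fin n) := ⟨⟨0, hn⟩⟩
  refine div_add_le_div_add_one_of_le_mul (by positivity)
    (sum_pos (fun j _ => exp_pos _) univ_nonempty) (exp_pos _).le ?_
  calc ∑ j, exp (C * q j) ≤ ∑ _j : Fin n, exp (C * s) :=
        sum_le_sum fun j _ => exp_le_exp.2 (mul_le_mul_of_nonneg_left (hq j) hC)
    _ = exp (C * s) * ∑ _j : Fin n, 1 := by simp [mul_comm]
    _ ≤ exp (C * s) * ∑ j, exp (p j) :=
        mul_le_mul_of_nonneg_left (sum_le_sum fun j _ => one_le_exp (hp j)) (exp_pos _).le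

theorem le_attnEntry {K : ℝ} (hn : 2 ≤ n) (hC : 0 ≤ C) (hp : ∀ j, p j ≤ K)
    (hq : ∀ j, 0 ≤ q j) {j₀ : Fin n} (hs : s ≤ q j₀) :
    (exp (C * s) + 1) / (n * exp K + (exp (C * s) + 1)) ≤ attnEntry C p q := by
  have : Nontrivial (Fin n) := Fin.nontrivial_iff_two_le.mpr hn
  obtain ⟨k, hk⟩ := exists_ne j₀
  have hN : exp (C * s) + 1 ≤ ∑ j, exp (C * q j) :=
    calc exp (C * s) + 1 ≤ exp (C * q j₀) + exp (C * q k) :=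
          add_le_add (exp_le_exp.2 (mul_le_mul_of_nonneg_left hs hC))
            (one_le_exp (mul_nonneg hC (hq k)))
      _ ≤ ∑ j, exp (C * q j) :=
          add_le_sum (f := fun j => exp (C * q j)) (fun j _ => (exp_pos _).le) (mem_univ _)
            (mem_univ _) hk.symm
  have hD : ∑ j, exp (p j) ≤ n * exp K :=
    calc ∑ j, exp (p j) ≤ ∑ _j : Fin n, exp K := sum_le_sum fun j _ => exp_le_exp.2 (hp j)
      _ = n * exp K := by simp
  exact div_add_le_div_add (by positivity) (by positivity) hN hD

end AttnEntry

theorem zpow_neg_mul_exp_neg_sq (n d : ℕ) :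
    (n : ℝ) ^ (-(3 * (d : ℤ))) * exp (-(3 * (d : ℝ) ^ 2)) = ((n * exp d) ^ (3 * d))⁻¹ := by
  have hexp : exp (3 * (d : ℝ) ^ 2) = exp d ^ (3 * d) := by
    rw [← exp_nat_mul]
    push_cast
    ring_nf
  rw [zpow_neg, exp_neg, hexp, mul_pow, mul_inv]
  norm_cast

theorem four_le_mul_exp {y x : ℝ} (hy : 2 ≤ y) (hx : 1 ≤ x) : 4 ≤ y * exp x := by
  have : 2 ≤ exp x := by linarith [add_one_le_exp x]
  nlinarith

theorem exp_mul_sub_one {C : ℝ} {t : ℕ} (ht : 1 ≤ t) :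
    exp (C * ((t : ℝ) - 1)) = exp C ^ (t - 1) := by
  rw [← Nat.cast_pred ht, mul_comm, exp_nat_mul]

theorem tvpp_softmax_add_approx_general (n d t : ℕ) (hn : 2 ≤ n) (hd : 1 ≤ d)
    (ht1 : 1 ≤ t) (htd : t ≤ d)
    (a b : Fin n → Fin d → ℝ)
    (ha : ∀ i r, a i r = 0 ∨ a i r = 1) (hb : ∀ i r, b i r = 0 ∨ b i r = 1)
    (μ : ℝ)
    (hμub : μ ≤ (n : ℝ) ^ (-(3 * (d : ℤ))) * Real.exp (-(3 * (d : ℝ) ^ 2)))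
    (C : ℝ) (hC : C = Real.log n + d)
    (N D Y : Fin n → ℝ)
    (hN : ∀ i, N i = ∑ j, Real.exp (C * dotp (a i) (b j)))
    (hD : ∀ i, D i = ∑ j, Real.exp (dotp (a i) (a j)))
    (hY : ∀ i, Y i = N i / (D i + N i))
    (Yhat : Fin n → ℝ)
    (hYhat : ∀ i, |Yhat i - Y i| ≤ μ) :
    (∃ i j, (t : ℝ) ≤ dotp (a i) (b j)) ↔
      (∃ i, Yhat i > Real.exp (C * ((t : ℝ) - 1)) /
        (Real.exp (C * ((t : ℝ) - 1)) + 1) + μ) := by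
  have hnR : (2 : ℝ) ≤ n := by exact_mod_cast hn
  have hC0 : 0 ≤ C := by
    rw [hC]
    have := log_nonneg (by linarith : (1 : ℝ) ≤ n)
    positivity
  have hE : exp C = n * exp d := by rw [hC, exp_add, exp_log (by linarith)]
  have hE4 : 4 ≤ exp C := hE ▸ four_le_mul_exp hnR (by exact_mod_cast hd)
  have hYi : ∀ i, Y i = attnEntry C (fun j => dotp (a i) (a j)) (fun j => dotp (a i) (b j)) :=
    fun i => by rw [hY, hN, hD, attnEntry]
  constructor
  · rintro ⟨i, j, hij⟩
    refine ⟨i, ?_⟩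
    have hlow := le_attnEntry hn hC0 (fun j => dotp_le_of_binary (ha i) (ha j))
      (fun j => dotp_nonneg_of_binary (ha i) (hb j)) hij
    rw [← hYi, ← hE, show (t : ℝ) = (t - 1 : ℝ) + 1 by ring, mul_add, mul_one, exp_add,
      exp_mul_sub_one ht1] at hlow
    have hμE : μ ≤ (exp C ^ (3 * d))⁻¹ := hμub.trans_eq (by rw [hE, zpow_neg_mul_exp_neg_sq])
    have hgap := div_add_one_add_two_mul_lt hd hE4 (by positivity)
      (pow_le_pow_right₀ (by linarith) (show t - 1 ≤ d - 1 by omega)) hμE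
    rw [exp_mul_sub_one ht1]
    linarith [(abs_le.1 (hYhat i)).1]
  · rintro ⟨i, hi⟩
    by_contra! hno
    have hup := attnEntry_le (by omega) hC0 (fun j => dotp_nonneg_of_binary (ha i) (ha j))
      (fun j => dotp_le_sub_one_of_lt (ha i) (hb j) (hno i j))
    rw [← hYi] at hup
    linarith [(abs_le.1 (hYhat i)).2]

/-- Case analysis underlying Appendix Theorem 6: softmax dot-product
self-attention with element-wise additive error at most `n^(-3d) e^(-3d²)`. -/
theorem tvpp_softmax_add_approx (n d t : ℕ) (hn : 2 ≤ n) (hd : 1 ≤ d)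
    (ht1 : 1 ≤ t) (htd : t ≤ d)
    (a b : Fin n → Fin d → ℝ)
    (ha : ∀ i r, a i r = 0 ∨ a i r = 1) (hb : ∀ i r, b i r = 0 ∨ b i r = 1)
    (μ : ℝ) (hμ0 : 0 ≤ μ)
    (hμub : μ ≤ (n : ℝ) ^ (-(3 * (d : ℤ))) * Real.exp (-(3 * (d : ℝ) ^ 2)))
    (C : ℝ) (hC : C = Real.log n + d)
    (N D Y : Fin n → ℝ)
    (hN : ∀ i, N i = ∑ j, Real.exp (C * dotp (a i) (b j)))
    (hD : ∀ i, D i = ∑ j, Real.exp (dotp (a i) (a j)))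
    (hY : ∀ i, Y i = N i / (D i + N i))
    (Yhat : Fin n → ℝ)
    (hYhat : ∀ i, |Yhat i - Y i| ≤ μ) :
    (∃ i j, (t : ℝ) ≤ dotp (a i) (b j)) ↔
      (∃ i, Yhat i > Real.exp (C * ((t : ℝ) - 1)) /
        (Real.exp (C * ((t : ℝ) - 1)) + 1) + μ) :=
  tvpp_softmax_add_approx_general n d t hn hd ht1 htd a b ha hb μ hμub C hC N D Y hN hD hY Yhat
    hYhat
end
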